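/- arXiv:1611.03919 — 10 statements merged into one kernel-verified Lean document; each statement's English description precedes it below -/
import Mathlib

section
/- Let a, d ∈ ℕ with a ≥ 1 and gcd(a, d) ≥ 2 (i.e., a and d are not coprime). Then there exists x ∈ ℕ such that the trajectory O_{a,d}(x) does not loop, i.e., there do not exist N ∈ ℕ and k ≥ 1 with T_{a,d}^(N+k)(x) = T_{a,d}^(N)(x). -/
/-! If `g = gcd a d` does not divide `x`, then no term of `x, x + a, x + 2a, …` is divisible by `g`,
hence none by `d`, so the trajectory of `x` is the arithmetic progression `x + n a`, which is
strictly increasing when `a ≥ 1`. Such an `x` exists (e.g. `x = 1`) as soon as `g ≥ 2`. -/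

/-- The additive Collatz function `T_{a,d}`. -/
def addCollatz (a d : ℕ) (x : ℕ) : ℕ := if d ∣ x then x / d else x + a

theorem addCollatz_of_not_dvd {a d x : ℕ} (h : ¬ d ∣ x) : addCollatz a d x = x + a := by
  rw [addCollatz, if_neg h]

theorem not_dvd_add_mul_of_not_gcd_dvd {a d x : ℕ} (h : ¬ Nat.gcd a d ∣ x) (n : ℕ) :
    ¬ d ∣ x + n * a := fun hd =>
  h <| (Nat.dvd_add_left (dvd_mul_of_dvd_right (Nat.gcd_dvd_left a d) n)).mp
    ((Nat.gcd_dvd_right a d).trans hd)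

theorem iterate_addCollatz_of_not_gcd_dvd {a d x : ℕ} (h : ¬ Nat.gcd a d ∣ x) (n : ℕ) :
    (addCollatz a d)^[n] x = x + n * a := by
  induction n with
  | zero => simp
  | succ n ih =>
    rw [Function.iterate_succ_apply', ih,
      addCollatz_of_not_dvd (not_dvd_add_mul_of_not_gcd_dvd h n)]
    ring

theorem stmt_1 (a d : ℕ) (ha : 1 ≤ a) (hg : 2 ≤ Nat.gcd a d) :
    ∃ x : ℕ, ¬ ∃ (N k : ℕ), 1 ≤ k ∧
      (addCollatz a d)^[N + k] x = (addCollatz a d)^[N] x := by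
  have h1 : ¬ Nat.gcd a d ∣ 1 := fun h => by
    rw [Nat.dvd_one.mp h] at hg
    omega
  refine ⟨1, fun ⟨N, k, hk, hloop⟩ => ?_⟩
  rw [iterate_addCollatz_of_not_gcd_dvd h1, iterate_addCollatz_of_not_gcd_dvd h1] at hloop
  nlinarith [Nat.mul_le_mul hk ha]
end

section
/- Let a, d ∈ ℕ with a ≥ 1, d ≥ 2, and gcd(a, d) = 1. Then for every x ∈ ℕ there exists N ∈ ℕ such that T_{a,d}^(N)(x) ≤ a. -/
theorem Nat.exists_lt_dvd_add_mul_of_coprime {a d : ℕ} (hcop : a.Coprime d) (hd : d ≠ 0)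
    (x : ℕ) : ∃ k < d, d ∣ x + k * a := by
  obtain ⟨k, hkd, hk⟩ := Nat.exists_mul_mod_eq_of_coprime ((d - 1) * x) hcop hd
  refine ⟨k, hkd, Nat.modEq_zero_iff_dvd.mp ?_⟩
  calc x + k * a ≡ x + (d - 1) * x [MOD d] := Nat.ModEq.add_left x (by rwa [mul_comm])
    _ = d * x := by rw [← one_add_mul, Nat.add_sub_cancel' (Nat.one_le_iff_ne_zero.mpr hd)]
    _ ≡ 0 [MOD d] := Nat.modEq_zero_iff_dvd.mpr (dvd_mul_right d x)

theorem Function.exists_iterate_le_of_exists_iterate_lt {f : ℕ → ℕ} {a : ℕ}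
    (h : ∀ x, a < x → ∃ n, f^[n] x < x) (x : ℕ) : ∃ N, f^[N] x ≤ a := by
  induction x using Nat.strong_induction_on with
  | _ x ih =>
    rcases le_or_gt x a with hxa | hxa
    · exact ⟨0, hxa⟩
    obtain ⟨n, hn⟩ := h x hxa
    obtain ⟨N, hN⟩ := ih _ hn
    exact ⟨N + n, by rwa [Function.iterate_add_apply]⟩

namespace addCollatz

variable {a d : ℕ}

theorem iterate_eq_add_mul {x m : ℕ} (h : ∀ j < m, ¬ d ∣ x + j * a) :
    (addCollatz a d)^[m] x = x + m * a := by
  induction m with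
  | zero => simp
  | succ m ih =>
    rw [Function.iterate_succ_apply', ih fun j hj => h j (by omega), addCollatz,
      if_neg (h m m.lt_succ_self), add_one_mul, add_assoc]

theorem exists_iterate_eq_div (hcop : a.Coprime d) (hd : d ≠ 0) (x : ℕ) :
    ∃ k < d, (addCollatz a d)^[k + 1] x = (x + k * a) / d := by
  have hex := Nat.exists_lt_dvd_add_mul_of_coprime hcop hd x
  have hdvd : ∃ k, d ∣ x + k * a := hex.imp fun _ => And.right
  refine ⟨Nat.find hdvd, ?_, ?_⟩
  · obtain ⟨k, hkd, hk⟩ := hex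
    exact (Nat.find_min' hdvd hk).trans_lt hkd
  · rw [Function.iterate_succ_apply', iterate_eq_add_mul fun j => Nat.find_min hdvd,
      addCollatz, if_pos (Nat.find_spec hdvd)]

theorem exists_iterate_lt (hcop : a.Coprime d) (hd : 2 ≤ d) {x : ℕ} (hx : a < x) :
    ∃ n, (addCollatz a d)^[n] x < x := by
  obtain ⟨k, hkd, hk⟩ := exists_iterate_eq_div hcop (by omega) x
  refine ⟨k + 1, ?_⟩
  rw [hk, Nat.div_lt_iff_lt_mul (by omega)]
  nlinarith

end addCollatz

theorem stmt_3_general (a d : ℕ) (hd : 2 ≤ d) (hcop : Nat.gcd a d = 1) :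
    ∀ x : ℕ, ∃ N : ℕ, (addCollatz a d)^[N] x ≤ a :=
  Function.exists_iterate_le_of_exists_iterate_lt fun _ =>
    addCollatz.exists_iterate_lt hcop hd

theorem stmt_3 (a d : ℕ) (ha : 1 ≤ a) (hd : 2 ≤ d) (hcop : Nat.gcd a d = 1) :
    ∀ x : ℕ, ∃ N : ℕ, (addCollatz a d)^[N] x ≤ a :=
  stmt_3_general a d hd hcop
end

section
/- Let a, d ∈ ℕ with a ≥ 1, d ≥ 1, and gcd(a, d) = 1. If x ∈ ℕ satisfies x ≤ a, then the trajectory O_{a,d}(x) loops, i.e., there exist N ∈ ℕ and k ≥ 1 such that T_{a,d}^(N+k)(x) = T_{a,d}^(N)(x). -/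
theorem Function.exists_iterate_add_eq_of_forall_iterate_mem {α : Type*} {f : α → α} {x : α}
    {s : Set α} (hs : s.Finite) (hx : ∀ n, f^[n] x ∈ s) :
    ∃ N k, 1 ≤ k ∧ f^[N + k] x = f^[N] x := by
  obtain ⟨m, n, hmn, heq⟩ := hs.exists_lt_map_eq_of_forall_mem hx
  exact ⟨m, n - m, by omega, by rw [Nat.add_sub_cancel' hmn.le, heq]⟩

theorem Nat.exists_lt_dvd_add_mul {a d : ℕ} (z : ℕ) (hd : 1 ≤ d) (hcop : a.Coprime d) :
    ∃ j < d, d ∣ z + j * a := by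
  have : NeZero d := ⟨by omega⟩
  refine ⟨((-z : ZMod d) * (a : ZMod d)⁻¹).val, ZMod.val_lt _, ?_⟩
  rw [← ZMod.natCast_eq_zero_iff]
  push_cast
  rw [ZMod.natCast_val, ZMod.cast_id, mul_assoc, mul_comm _ (a : ZMod d),
    ZMod.coe_mul_inv_eq_one a hcop]
  ring

namespace addCollatz

def ReachesSmallMultiple (a d y : ℕ) : Prop := ∃ j, d ∣ y + j * a ∧ y + j * a ≤ a * d

variable {a d : ℕ}

theorem ReachesSmallMultiple.le {y : ℕ} (h : ReachesSmallMultiple a d y) : y ≤ a * d := by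
  obtain ⟨j, -, hle⟩ := h
  omega

theorem reachesSmallMultiple_of_le {z : ℕ} (hd : 1 ≤ d) (hcop : a.Coprime d) (hz : z ≤ a) :
    ReachesSmallMultiple a d z := by
  obtain ⟨j, hjd, hdvd⟩ := Nat.exists_lt_dvd_add_mul z hd hcop
  refine ⟨j, hdvd, ?_⟩
  calc z + j * a ≤ a + (d - 1) * a := by gcongr; omega
    _ = (d - 1 + 1) * a := by ring
    _ = a * d := by rw [Nat.sub_add_cancel hd, mul_comm]

theorem ReachesSmallMultiple.step {y : ℕ} (hd : 1 ≤ d) (hcop : a.Coprime d)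
    (h : ReachesSmallMultiple a d y) : ReachesSmallMultiple a d (addCollatz a d y) := by
  unfold _root_.addCollatz
  split_ifs with hdy
  · refine reachesSmallMultiple_of_le hd hcop (Nat.div_le_of_le_mul ?_)
    rw [mul_comm]
    exact h.le
  · obtain ⟨_ | i, hdvd, hle⟩ := h
    · exact absurd (by simpa using hdvd) hdy
    · rw [show y + (i + 1) * a = y + a + i * a by ring] at hdvd hle
      exact ⟨i, hdvd, hle⟩

end addCollatz

theorem stmt_5_general (a d x : ℕ) (hd : 1 ≤ d) (hcop : Nat.gcd a d = 1)
    (hx : x ≤ a) :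
    ∃ (N k : ℕ), 1 ≤ k ∧ (addCollatz a d)^[N + k] x = (addCollatz a d)^[N] x := by
  have hreach (n : ℕ) : addCollatz.ReachesSmallMultiple a d ((addCollatz a d)^[n] x) :=
    Function.Iterate.rec _ (addCollatz.reachesSmallMultiple_of_le hd hcop hx)
      (fun _ h ↦ h.step hd hcop) n
  exact Function.exists_iterate_add_eq_of_forall_iterate_mem (Set.finite_Iic (a * d))
    fun n ↦ (hreach n).le

theorem stmt_5 (a d x : ℕ) (ha : 1 ≤ a) (hd : 1 ≤ d) (hcop : Nat.gcd a d = 1)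
    (hx : x ≤ a) :
    ∃ (N k : ℕ), 1 ≤ k ∧ (addCollatz a d)^[N + k] x = (addCollatz a d)^[N] x :=
  stmt_5_general a d x hd hcop hx
end

section
/- Let a, d ∈ ℕ with a ≥ 1, d ≥ 1, and gcd(a, d) = 1. Then for every x ∈ ℕ the trajectory O_{a,d}(x) loops, i.e., there exist N ∈ ℕ and k ≥ 1 such that T_{a,d}^(N+k)(x) = T_{a,d}^(N)(x). -/
theorem Function.exists_iterate_add_eq_of_finite {α : Type*} {f : α → α} {x : α} {s : Set α}
    (hs : s.Finite) (hmem : ∀ n, f^[n] x ∈ s) : ∃ N k, 1 ≤ k ∧ f^[N + k] x = f^[N] x := by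
  obtain ⟨m, n, hmn, heq⟩ := hs.exists_lt_map_eq_of_forall_mem hmem
  exact ⟨m, n - m, by omega, by rw [Nat.add_sub_cancel' hmn.le, heq]⟩

section AddCollatz

variable {a d y : ℕ}

/-- The least `i` with `d ∣ y + i a`, computed as the residue of `-y / a` modulo `d`. -/
def stepsToMultiple (a d y : ℕ) : ℕ := (-(y : ZMod d) * (a : ZMod d)⁻¹).val

def nextMultiple (a d y : ℕ) : ℕ := y + a * stepsToMultiple a d y

theorem stepsToMultiple_lt [NeZero d] : stepsToMultiple a d y < d := ZMod.val_lt _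

theorem stepsToMultiple_of_dvd (hy : d ∣ y) : stepsToMultiple a d y = 0 := by
  simp [stepsToMultiple, (ZMod.natCast_eq_zero_iff y d).mpr hy]

theorem dvd_nextMultiple [NeZero d] (hcop : a.Coprime d) : d ∣ nextMultiple a d y := by
  rw [nextMultiple, ← ZMod.natCast_eq_zero_iff]
  push_cast
  rw [stepsToMultiple, ZMod.natCast_zmod_val]
  linear_combination (-(y : ZMod d)) * ZMod.coe_mul_inv_eq_one a hcop

theorem stepsToMultiple_add_add_one [NeZero d] (hcop : a.Coprime d) (hy : ¬d ∣ y) :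
    stepsToMultiple a d (y + a) + 1 = stepsToMultiple a d y := by
  have : Fact (1 < d) := ⟨NeZero.one_le.lt_of_ne (by rintro rfl; exact hy (one_dvd y))⟩
  have hpos : stepsToMultiple a d y ≠ 0 := fun h0 ↦
    hy (by simpa [nextMultiple, h0] using dvd_nextMultiple (y := y) hcop)
  have hshift : -((y + a : ℕ) : ZMod d) * (a : ZMod d)⁻¹ = -(y : ZMod d) * (a : ZMod d)⁻¹ - 1 := by
    push_cast
    linear_combination (-1 : ZMod d) * ZMod.coe_mul_inv_eq_one a hcop
  unfold stepsToMultiple at hpos ⊢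
  rw [hshift, ZMod.val_sub (by rw [ZMod.val_one]; omega), ZMod.val_one]
  omega

theorem nextMultiple_add [NeZero d] (hcop : a.Coprime d) (hy : ¬d ∣ y) :
    nextMultiple a d (y + a) = nextMultiple a d y := by
  rw [nextMultiple, nextMultiple, ← stepsToMultiple_add_add_one hcop hy]
  ring

theorem nextMultiple_of_dvd (hy : d ∣ y) : nextMultiple a d y = y := by
  simp [nextMultiple, stepsToMultiple_of_dvd hy]

theorem le_nextMultiple : y ≤ nextMultiple a d y := Nat.le_add_right _ _

theorem nextMultiple_le [NeZero d] : nextMultiple a d y ≤ y + a * d :=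
  Nat.add_le_add_left (Nat.mul_le_mul_left a stepsToMultiple_lt.le) y

theorem nextMultiple_addCollatz_le [NeZero d] (hcop : a.Coprime d) {B : ℕ} (hB : 2 * a * d ≤ B)
    (hy : nextMultiple a d y ≤ B) : nextMultiple a d (addCollatz a d y) ≤ B := by
  by_cases hdy : d ∣ y
  · rw [nextMultiple_of_dvd hdy] at hy
    rw [addCollatz, if_pos hdy]
    obtain rfl | hd := (NeZero.one_le : 1 ≤ d).eq_or_lt
    · rwa [Nat.div_one, nextMultiple_of_dvd (one_dvd y)]
    have hhalf : y / d ≤ y / 2 := Nat.div_le_div_left hd (by norm_num)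
    have := nextMultiple_le (a := a) (d := d) (y := y / d)
    have : y / 2 * 2 ≤ y := Nat.div_mul_le_self y 2
    linarith
  · rwa [addCollatz, if_neg hdy, nextMultiple_add hcop hdy]

theorem nextMultiple_iterate_addCollatz_le [NeZero d] (hcop : a.Coprime d) (x n : ℕ) :
    nextMultiple a d ((addCollatz a d)^[n] x) ≤ x + 2 * a * d := by
  induction n with
  | zero =>
    have := nextMultiple_le (a := a) (d := d) (y := x)
    simp only [Function.iterate_zero, id]
    nlinarith
  | succ n ih =>
    rw [Function.iterate_succ_apply']
    exact nextMultiple_addCollatz_le hcop (Nat.le_add_left _ _) ih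

end AddCollatz

theorem stmt_7_general (a d : ℕ) (hd : 1 ≤ d) (hcop : Nat.gcd a d = 1) :
    ∀ x : ℕ, ∃ (N k : ℕ), 1 ≤ k ∧
      (addCollatz a d)^[N + k] x = (addCollatz a d)^[N] x := by
  have : NeZero d := ⟨by omega⟩
  intro x
  refine Function.exists_iterate_add_eq_of_finite (Set.finite_Iic (x + 2 * a * d)) fun n ↦ ?_
  exact le_nextMultiple.trans (nextMultiple_iterate_addCollatz_le hcop x n)

theorem stmt_7 (a d : ℕ) (ha : 1 ≤ a) (hd : 1 ≤ d) (hcop : Nat.gcd a d = 1) :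
    ∀ x : ℕ, ∃ (N k : ℕ), 1 ≤ k ∧
      (addCollatz a d)^[N + k] x = (addCollatz a d)^[N] x :=
  stmt_7_general a d hd hcop
end

section
/- Let a ∈ ℕ with a ≥ 1 and let d ∈ ℕ be coprime to a. Let H be the subgroup of the unit group (ℤ/aℤ)* generated by (the residue class of) d, acting on ℤ/aℤ by multiplication. Then for every x ∈ ℤ/aℤ, the cardinality of the stabilizer of x in H equals |H| / α_{p}(d), where p = a / gcd(x̃, a), x̃ ∈ {0,…,a−1} is the canonical representative of x, and α_p(d) is the multiplicative order of d modulo p. -/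
/-!
By orbit–stabilizer for the cyclic group `H = ⟨u⟩`, `|Stab x| · |orbit x| = |H|`, and the orbit of
`x` has as many elements as the least `k > 0` with `d ^ k * x = x`. As `x` has additive order
`p = a / gcd(x̃, a)`, the equation `d ^ k * x = x` holds iff `d ^ k ≡ 1 mod p`, so that least `k`
is the order of `d` modulo `p`.
-/

open Function Subgroup

theorem MulAction.card_stabilizer_zpowers_mul_minimalPeriod {G X : Type*} [Group G]
    [MulAction G X] (g : G) (x : X) :
    Nat.card (stabilizer (zpowers g) x) * minimalPeriod (g • ·) x = orderOf g := by
  rw [← Nat.card_zpowers, ← (stabilizer (zpowers g) x).card_mul_index, index_eq_card,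
    Nat.card_congr (zpowersQuotientStabilizerEquiv g x).toEquiv,
    Nat.card_congr Multiplicative.toAdd, Nat.card_zmod]

theorem nsmul_eq_self_iff_natCast_eq_one {A : Type*} [AddLeftCancelMonoid A] (x : A) (c : ℕ) :
    c • x = x ↔ (c : ZMod (addOrderOf x)) = 1 := by
  rw [← Nat.cast_one, ZMod.natCast_eq_natCast_iff, ← nsmul_eq_nsmul_iff_modEq, one_nsmul]

theorem Units.minimalPeriod_smul_eq_orderOf {R : Type*} [Ring R] (u : Rˣ) (d : ℕ)
    (hu : (u : R) = d) (x : R) :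
    minimalPeriod (u • ·) x = orderOf (d : ZMod (addOrderOf x)) := by
  refine Nat.dvd_right_iff_eq.mp fun k => ?_
  rw [← isPeriodicPt_iff_minimalPeriod_dvd, orderOf_dvd_iff_pow_eq_one, ← Nat.cast_pow,
    ← nsmul_eq_self_iff_natCast_eq_one, IsPeriodicPt, IsFixedPt, smul_iterate_apply,
    Units.smul_def, Units.val_pow_eq_pow_val, hu, nsmul_eq_mul, Nat.cast_pow]
  rfl

theorem ZMod.addOrderOf_eq_div_gcd_val {a : ℕ} [NeZero a] (x : ZMod a) :
    addOrderOf x = a / Nat.gcd x.val a := by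
  rw [← ZMod.natCast_zmod_val x, ZMod.addOrderOf_coe _ (NeZero.ne a), Nat.gcd_comm,
    ZMod.val_natCast_of_lt x.val_lt]

theorem stmt_10 (a d : ℕ) (ha : 1 ≤ a) (hcop : Nat.Coprime d a)
    (H : Subgroup (ZMod a)ˣ) (hH : H = Subgroup.zpowers (ZMod.unitOfCoprime d hcop))
    (x : ZMod a) :
    Nat.card (MulAction.stabilizer H x)
      = Nat.card H / orderOf ((d : ZMod (a / Nat.gcd x.val a))) := by
  have : NeZero a := ⟨by omega⟩
  subst hH
  rw [← ZMod.addOrderOf_eq_div_gcd_val,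
    ← Units.minimalPeriod_smul_eq_orderOf _ d (ZMod.coe_unitOfCoprime d hcop), Nat.card_zpowers,
    ← MulAction.card_stabilizer_zpowers_mul_minimalPeriod _ x,
    Nat.mul_div_cancel _ (Nat.pos_of_ne_zero (NeZero.ne _))]
end

section
/- Let a ∈ ℕ with a ≥ 1 and let d ∈ ℕ be coprime to a. Let ξ(a,d) denote the number of orbits of the action on ℤ/aℤ of the subgroup of (ℤ/aℤ)* generated by d. Then ξ(a,d) = Σ_{f ∣ a} φ(f) / α_f(d), where the sum is over the positive divisors f of a, φ is Euler's totient function, and each division φ(f)/α_f(d) is exact (α_f(d) divides φ(f)). -/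
/-!
Multiplication by the unit `d` preserves additive order, so every orbit consists of elements of a
common order `f ∣ a`. There are `φ f` elements of order `f`, and the orbit of such an element `y`
has `α_f(d)` elements, because `d ^ n * y = y` exactly when `d ^ n ≡ 1 [MOD f]`. Counting the
elements of order `f` orbit by orbit gives `φ f = #{orbits of order f} * α_f(d)`, which yields
both the divisibility and the formula.
-/

open Finset MulAction Function

theorem MulAction.card_fiber_eq_card_orbits_mul {G X ι : Type*} [Group G]
    [MulAction G X] [Fintype X] [Fintype (orbitRel.Quotient G X)] [DecidableEq ι]
    (F : X → ι) (hF : ∀ (g : G) x, F (g • x) = F x) (i : ι) (m : ℕ)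
    (hm : ∀ x, F x = i → Nat.card (orbit G x) = m) :
    #{x | F x = i} = #{ω : orbitRel.Quotient G X | F ω.out = i} * m := by
  classical
  have mk_eq_iff (x : X) (ω : orbitRel.Quotient G X) :
      Quotient.mk'' x = ω ↔ x ∈ orbit G ω.out := by
    conv_lhs => rw [← Quotient.out_eq' ω]
    exact Quotient.eq''.trans orbitRel_apply
  have hF_out (x : X) : F (Quotient.mk'' x : orbitRel.Quotient G X).out = F x := by
    obtain ⟨g, hg⟩ := (mk_eq_iff x _).mp rfl
    exact (hF g _).symm.trans (congrArg F hg)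
  rw [card_eq_sum_card_fiberwise (f := fun x => (Quotient.mk'' x : orbitRel.Quotient G X))
    (t := {ω | F ω.out = i}) fun x hx => by simpa [hF_out] using hx]
  refine sum_const_nat fun ω hω => ?_
  rw [mem_filter] at hω
  have hfiber : ({x ∈ {x | F x = i} | Quotient.mk'' x = ω} : Finset X) =
      ({x | x ∈ orbit G ω.out} : Finset X) := by
    ext x
    simp only [mem_filter, mem_univ, true_and, ← mk_eq_iff]
    refine ⟨And.right, fun h => ⟨?_, h⟩⟩
    rw [← hF_out x, h, hω.2]
  rw [hfiber, ← Fintype.card_subtype, ← Nat.card_eq_fintype_card]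
  exact hm _ hω.2

theorem addOrderOf_smul_eq {G M : Type*} [Group G] [AddMonoid M] [DistribMulAction G M]
    (g : G) (x : M) : addOrderOf (g • x) = addOrderOf x :=
  addOrderOf_injective (DistribSMul.toAddMonoidHom M g) (MulAction.injective g) x

theorem isPeriodicPt_natCast_mul_iff {R : Type*} [Ring R] (d n : ℕ) (x : R) :
    IsPeriodicPt ((d : R) * ·) n x ↔ (d : ZMod (addOrderOf x)) ^ n = 1 := by
  simp only [IsPeriodicPt, IsFixedPt, mul_left_iterate]
  rw [← Nat.cast_pow, ← Nat.cast_pow, ← nsmul_eq_mul, ← Nat.cast_one,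
    ZMod.natCast_eq_natCast_iff, ← nsmul_eq_nsmul_iff_modEq, one_nsmul]

theorem minimalPeriod_natCast_mul {R : Type*} [Ring R] (d : ℕ) (x : R) :
    minimalPeriod ((d : R) * ·) x = orderOf (d : ZMod (addOrderOf x)) := by
  rw [orderOf, minimalPeriod_eq_minimalPeriod_iff]
  intro n
  rw [isPeriodicPt_natCast_mul_iff, isPeriodicPt_mul_iff_pow_eq_one]

namespace ZMod

theorem card_orbit_zpowers_unitOfCoprime {a d : ℕ} (hcop : d.Coprime a) (y : ZMod a) :
    Nat.card (orbit (Subgroup.zpowers (unitOfCoprime d hcop)) y) =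
      orderOf (d : ZMod (addOrderOf y)) := by
  rw [Nat.card_congr (orbitZPowersEquiv _ y), Nat.card_zmod, ← minimalPeriod_natCast_mul]
  simp only [Units.smul_def, coe_unitOfCoprime, smul_eq_mul]

theorem totient_eq_card_orbits_mul_orderOf {a d f : ℕ} [NeZero a] (hcop : d.Coprime a)
    [Fintype (orbitRel.Quotient (Subgroup.zpowers (unitOfCoprime d hcop)) (ZMod a))]
    (hf : f ∣ a) :
    f.totient = #{ω : orbitRel.Quotient (Subgroup.zpowers (unitOfCoprime d hcop)) (ZMod a) |
      addOrderOf ω.out = f} * orderOf (d : ZMod f) := by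
  rw [← IsAddCyclic.card_addOrderOf_eq_totient (α := ZMod a) (by rwa [card])]
  refine card_fiber_eq_card_orbits_mul _ (fun g x => addOrderOf_smul_eq g x) f _ ?_
  rintro x rfl
  exact card_orbit_zpowers_unitOfCoprime hcop x

end ZMod

theorem stmt_11 (a d : ℕ) (ha : 1 ≤ a) (hcop : Nat.Coprime d a) :
    (∀ f ∈ a.divisors, orderOf ((d : ZMod f)) ∣ Nat.totient f) ∧
    Nat.card (MulAction.orbitRel.Quotient
        (Subgroup.zpowers (ZMod.unitOfCoprime d hcop)) (ZMod a))
      = ∑ f ∈ a.divisors, Nat.totient f / orderOf ((d : ZMod f)) := by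
  classical
  have : NeZero a := ⟨by omega⟩
  have key (f : ℕ) (hf : f ∈ a.divisors) :=
    ZMod.totient_eq_card_orbits_mul_orderOf hcop (Nat.dvd_of_mem_divisors hf)
  refine ⟨fun f hf => Dvd.intro_left _ (key f hf).symm, ?_⟩
  have order_mem_divisors (x : ZMod a) : addOrderOf x ∈ a.divisors :=
    Nat.mem_divisors.mpr ⟨(addOrderOf_dvd_natCard x).trans (dvd_of_eq (Nat.card_zmod a)),
      NeZero.ne a⟩
  rw [Nat.card_eq_fintype_card, ← card_univ, card_eq_sum_card_fiberwise
    (f := fun ω => addOrderOf ω.out) (t := a.divisors) fun ω _ => order_mem_divisors ω.out]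
  refine sum_congr rfl fun f hf => (Nat.div_eq_of_eq_mul_left ?_ (key f hf)).symm
  refine Nat.pos_of_ne_zero fun h => (Nat.totient_pos.mpr (Nat.pos_of_mem_divisors hf)).ne' ?_
  rw [key f hf, h, mul_zero]
end

section
/- Let a ∈ ℕ with a ≥ 1 and let d ∈ ℕ be coprime to a. Let ξ(a,d) denote the number of orbits of the action on ℤ/aℤ of the subgroup of (ℤ/aℤ)* generated by d. Then, as rational numbers, ξ(a,d) ≥ Σ_{f ∣ a} φ(f) / λ(f), where the sum is over the positive divisors f of a, φ is Euler's totient function, and λ(f) is the exponent of the group (ℤ/fℤ)* (the Carmichael function). -/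
/-!
An element `x` of `ZMod a` of additive order `f` is fixed by `u ^ λ(f)` for every unit `u`, since
`u ^ λ(f) ≡ 1 (mod f)`; hence the orbit of `x` under `⟨u⟩` has at most `λ(f)` elements. Summing
`1 / |orbit x|` over all `x` counts every orbit exactly once, so the number of orbits is at least
`∑ₓ 1 / λ(ord x)`, and grouping the `x` by their order, of which there are `φ(f)` for each `f ∣ a`,
turns this into the right-hand side.
-/

open MulAction Finset

namespace ZMod

theorem addOrderOf_dvd {n : ℕ} (x : ZMod n) : addOrderOf x ∣ n :=
  addOrderOf_dvd_of_nsmul_eq_zero (by simp)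

theorem mul_eq_self_of_cast_eq_one {n : ℕ} {v x : ZMod n}
    (h : (v.cast : ZMod (addOrderOf x)) = 1) : v * x = x := by
  rw [← intCast_zmod_cast v, ← zsmul_eq_mul]
  nth_rw 2 [← one_zsmul x]
  rw [zsmul_eq_zsmul_iff_modEq, ← intCast_eq_intCast_iff, Int.cast_one, intCast_cast, h]

theorem pow_exponent_smul_eq_self {n : ℕ} (u : (ZMod n)ˣ) (x : ZMod n) :
    u ^ Monoid.exponent (ZMod (addOrderOf x))ˣ • x = x := by
  apply mul_eq_self_of_cast_eq_one
  have := congrArg Units.val (Monoid.pow_exponent_eq_one (unitsMap (addOrderOf_dvd x) u))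
  simpa [unitsMap_val, cast_pow (addOrderOf_dvd x)] using this

end ZMod

namespace MulAction

variable {G α : Type*} [Group G] [MulAction G α]

theorem card_orbit_pos [Finite α] (x : α) : 0 < Nat.card (orbit G x) :=
  Nat.card_pos_iff.mpr ⟨(nonempty_orbit x).to_subtype, inferInstance⟩

theorem card_orbit_zpowers_le (g : G) (x : α) {m : ℕ} (hm : 0 < m) (h : g ^ m • x = x) :
    Nat.card (orbit (Subgroup.zpowers g) x) ≤ m := by
  rw [Nat.card_congr (orbitZPowersEquiv g x), Nat.card_zmod]
  refine Function.IsPeriodicPt.minimalPeriod_le hm ?_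
  simpa [Function.IsPeriodicPt, Function.IsFixedPt, smul_iterate] using h

variable (G α) in
theorem sum_inv_card_orbit [Fintype α] :
    ∑ x : α, (Nat.card (orbit G x) : ℚ)⁻¹ = Nat.card (orbitRel.Quotient G α) := by
  classical
  rw [← (selfEquivSigmaOrbits' G α).symm.sum_comp, Fintype.sum_sigma, Nat.card_eq_fintype_card,
    ← card_univ, cast_card]
  refine sum_congr rfl fun ω _ ↦ ?_
  have horbit (y : ω.orbit) : orbit G (y : α) = ω.orbit := by
    rw [← orbitRel.Quotient.orbit_mk, orbitRel.Quotient.mem_orbit.mp y.2]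
  have hcard : Nat.card ω.orbit ≠ 0 :=
    Nat.card_ne_zero.mpr ⟨ω.nonempty_orbit.to_subtype, inferInstance⟩
  show ∑ y : ω.orbit, (Nat.card (orbit G (y : α)) : ℚ)⁻¹ = 1
  rw [Fintype.sum_congr _ _ fun y ↦ by rw [horbit y], sum_const, card_univ,
    Fintype.card_eq_nat_card, nsmul_eq_mul, mul_inv_cancel₀ (by exact_mod_cast hcard)]

end MulAction

theorem IsAddCyclic.sum_comp_addOrderOf {G M : Type*} [AddGroup G] [Fintype G] [IsAddCyclic G]
    [AddCommMonoid M] (g : ℕ → M) :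
    ∑ x : G, g (addOrderOf x) = ∑ f ∈ (Fintype.card G).divisors, Nat.totient f • g f := by
  classical
  rw [← sum_fiberwise_of_maps_to (g := addOrderOf) fun x _ ↦
    Nat.mem_divisors.mpr ⟨addOrderOf_dvd_card, Fintype.card_ne_zero⟩]
  refine sum_congr rfl fun f hf ↦ ?_
  rw [sum_congr rfl fun x hx ↦ congrArg g (mem_filter.mp hx).2, sum_const,
    card_addOrderOf_eq_totient (Nat.mem_divisors.mp hf).1]

theorem stmt_12 (a d : ℕ) (ha : 1 ≤ a) (hcop : Nat.Coprime d a) :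
    (Nat.card (MulAction.orbitRel.Quotient
        (Subgroup.zpowers (ZMod.unitOfCoprime d hcop)) (ZMod a)) : ℚ)
      ≥ ∑ f ∈ a.divisors, (Nat.totient f : ℚ) / (Monoid.exponent (ZMod f)ˣ : ℚ) := by
  have : NeZero a := ⟨by omega⟩
  set u := ZMod.unitOfCoprime d hcop
  have hcard_orbit (x : ZMod a) :
      Nat.card (orbit (Subgroup.zpowers u) x) ≤ Monoid.exponent (ZMod (addOrderOf x))ˣ :=
    have : NeZero (addOrderOf x) := ⟨(addOrderOf_pos x).ne'⟩
    card_orbit_zpowers_le u x (Monoid.exponent_pos.mpr .of_finite)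
      (ZMod.pow_exponent_smul_eq_self u x)
  calc ∑ f ∈ a.divisors, (Nat.totient f : ℚ) / (Monoid.exponent (ZMod f)ˣ : ℚ)
      = ∑ x : ZMod a, ((Monoid.exponent (ZMod (addOrderOf x))ˣ : ℕ) : ℚ)⁻¹ := by
        rw [IsAddCyclic.sum_comp_addOrderOf (fun f ↦ ((Monoid.exponent (ZMod f)ˣ : ℕ) : ℚ)⁻¹),
          ZMod.card]
        simp only [nsmul_eq_mul, div_eq_mul_inv]
    _ ≤ ∑ x : ZMod a, (Nat.card (orbit (Subgroup.zpowers u) x) : ℚ)⁻¹ :=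
        sum_le_sum fun x _ ↦ inv_anti₀ (by exact_mod_cast card_orbit_pos x)
          (by exact_mod_cast hcard_orbit x)
    _ = _ := sum_inv_card_orbit _ _
end

section
/- For every a ∈ ℕ with a ≥ 1, there exists d ∈ ℕ coprime to a such that for every positive divisor f of a, the multiplicative order of d modulo f equals λ(f), the exponent of the group (ℤ/fℤ)*. -/
/-!
The unit group modulo a prime power `p ^ k` is cyclic for odd `p`, and reduction modulo a
divisor is a surjection of unit groups, so a generator modulo `p ^ k` reduces to a generator
modulo every `p ^ c`, `c ≤ k`. Modulo `2 ^ c` with `c ≥ 3`, the element `3 ^ 2 = 1 + 2 ^ 3` has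
order `2 ^ (c - 3)`, so `3` has order `2 ^ (c - 2) = λ (2 ^ c)`; for `c ≤ 2` it generates the
cyclic group `(ZMod 4)ˣ`. By the Chinese remainder theorem, the order modulo a product of
coprime moduli is the lcm of the orders, and `λ` is multiplicative in the same way, so solutions
for the prime-power parts of `a` glue together.
-/

open ArithmeticFunction

def HasMaximalOrderModDivisors (d n : ℕ) : Prop :=
  ∀ f, f ∣ n → orderOf (d : ZMod f) = carmichael f

theorem MonoidHom.orderOf_map_eq_exponent_of_surjective {G H : Type*} [Group G] [Group H]
    [Finite G] {φ : G →* H} (hφ : Function.Surjective φ) {g : G} (hg : orderOf g = Nat.card G) :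
    orderOf (φ g) = Monoid.exponent H := by
  have : Finite H := Finite.of_surjective φ hφ
  have hg_top : Subgroup.zpowers g = ⊤ :=
    Subgroup.eq_top_of_card_eq _ (by rwa [Nat.card_zpowers])
  have hφg_top : Subgroup.zpowers (φ g) = ⊤ := by
    rw [← MonoidHom.map_zpowers, hg_top, Subgroup.map_top_of_surjective φ hφ]
  have : IsCyclic H := isCyclic_iff_exists_zpowers_eq_top.2 ⟨φ g, hφg_top⟩
  rw [orderOf_eq_card_of_zpowers_eq_top hφg_top, IsCyclic.exponent_eq_card]

theorem orderOf_natCast_eq_carmichael_of_dvd {d n f : ℕ} [NeZero n]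
    (hd : orderOf (d : ZMod n) = Nat.card (ZMod n)ˣ) (hf : f ∣ n) :
    orderOf (d : ZMod f) = carmichael f := by
  have : NeZero f := ⟨ne_zero_of_dvd_ne_zero (NeZero.ne n) hf⟩
  have hunit : IsUnit (d : ZMod n) := (orderOf_pos_iff.1 (hd ▸ Nat.card_pos)).isUnit
  have hcast : (d : ZMod f) = ZMod.unitsMap hf hunit.unit := by
    rw [ZMod.unitsMap_val, IsUnit.unit_spec, ZMod.cast_natCast hf]
  rw [hcast, orderOf_units, carmichael_eq_exponent',
    MonoidHom.orderOf_map_eq_exponent_of_surjective (ZMod.unitsMap_surjective hf)]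
  rwa [← orderOf_units, IsUnit.unit_spec]

theorem exists_hasMaximalOrderModDivisors_of_isCyclic {n : ℕ} [NeZero n] [IsCyclic (ZMod n)ˣ] :
    ∃ d, HasMaximalOrderModDivisors d n := by
  obtain ⟨g, hg⟩ := isCyclic_iff_exists_orderOf_eq_natCard.mp ‹IsCyclic (ZMod n)ˣ›
  refine ⟨(g : ZMod n).val, fun f hf ↦ orderOf_natCast_eq_carmichael_of_dvd ?_ hf⟩
  rwa [ZMod.natCast_zmod_val, orderOf_units]

theorem orderOf_three_zmod_two_pow (n : ℕ) : orderOf (3 : ZMod (2 ^ (n + 3))) = 2 ^ (n + 1) := by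
  have h9 : orderOf ((3 : ZMod (2 ^ (n + 3))) ^ 2) = 2 ^ n := by
    convert ZMod.orderOf_one_add_mul_prime_pow Nat.prime_two 3 three_ne_zero (by norm_num) 1
      (by decide) n using 2
    norm_num
  refine orderOf_eq_prime_pow ?_ ?_
  · cases n with
    | zero => decide
    | succ k =>
      rw [pow_succ' 2 k, pow_mul]
      exact pow_ne_one_of_lt_orderOf (by positivity) (h9 ▸ Nat.pow_lt_pow_succ one_lt_two)
  · rw [pow_succ' 2 n, pow_mul, ← h9, pow_orderOf_eq_one]

theorem hasMaximalOrderModDivisors_three_two_pow (k : ℕ) :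
    HasMaximalOrderModDivisors 3 (2 ^ k) := by
  intro f hf
  obtain ⟨c, -, rfl⟩ := (Nat.dvd_prime_pow Nat.prime_two).1 hf
  rcases le_or_gt c 2 with hc | hc
  · refine orderOf_natCast_eq_carmichael_of_dvd (n := 2 ^ 2) ?_ (pow_dvd_pow 2 hc)
    rw [Nat.card_eq_fintype_card, ZMod.card_units_eq_totient,
      show Nat.totient (2 ^ 2) = 2 by decide]
    exact orderOf_eq_prime (by decide) (by decide)
  · obtain ⟨n, rfl⟩ : ∃ n, c = n + 3 := ⟨c - 3, by omega⟩
    rw [carmichael_two_pow_of_ne_two (by omega), Nat.cast_ofNat, orderOf_three_zmod_two_pow]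
    rfl

theorem exists_hasMaximalOrderModDivisors_prime_pow {p : ℕ} (hp : p.Prime) (k : ℕ) :
    ∃ d, HasMaximalOrderModDivisors d (p ^ k) := by
  rcases eq_or_ne p 2 with rfl | hp2
  · exact ⟨3, hasMaximalOrderModDivisors_three_two_pow k⟩
  · have : NeZero (p ^ k) := ⟨pow_ne_zero k hp.ne_zero⟩
    have := ZMod.isCyclic_units_of_prime_pow p hp hp2 k
    exact exists_hasMaximalOrderModDivisors_of_isCyclic

theorem orderOf_natCast_zmod_mul {m n : ℕ} (h : m.Coprime n) (d : ℕ) :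
    orderOf (d : ZMod (m * n)) = Nat.lcm (orderOf (d : ZMod m)) (orderOf (d : ZMod n)) := by
  let e := ZMod.chineseRemainder h
  have he : e (d : ZMod (m * n)) = ((d : ZMod m), (d : ZMod n)) := by
    rw [map_natCast, Prod.ext_iff]
    exact ⟨Prod.fst_natCast d, Prod.snd_natCast d⟩
  rw [← e.toMulEquiv.orderOf_eq]
  change orderOf (e d) = _
  rw [he, Prod.orderOf]

theorem HasMaximalOrderModDivisors.of_modEq {d d' n : ℕ} (hd : HasMaximalOrderModDivisors d n)
    (h : d ≡ d' [MOD n]) : HasMaximalOrderModDivisors d' n := fun f hf ↦ by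
  rw [← hd f hf, (ZMod.natCast_eq_natCast_iff _ _ _).2 (h.symm.of_dvd hf)]

theorem HasMaximalOrderModDivisors.mul {d m n : ℕ} (h : m.Coprime n)
    (hm : HasMaximalOrderModDivisors d m) (hn : HasMaximalOrderModDivisors d n) :
    HasMaximalOrderModDivisors d (m * n) := by
  intro f hf
  obtain ⟨f₁, f₂, hf₁, hf₂, rfl⟩ := Nat.dvd_mul.1 hf
  have hcop : f₁.Coprime f₂ := (h.coprime_dvd_left hf₁).coprime_dvd_right hf₂
  rw [orderOf_natCast_zmod_mul hcop, hm f₁ hf₁, hn f₂ hf₂, carmichael_mul hcop]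

theorem exists_hasMaximalOrderModDivisors {n : ℕ} (hn : n ≠ 0) :
    ∃ d, HasMaximalOrderModDivisors d n := by
  induction n using Nat.recOnPrimeCoprime with
  | zero => exact absurd rfl hn
  | prime_pow p k hp => exact exists_hasMaximalOrderModDivisors_prime_pow hp k
  | coprime m n _ _ h ihm ihn =>
    obtain ⟨d₁, hd₁⟩ := ihm (by omega)
    obtain ⟨d₂, hd₂⟩ := ihn (by omega)
    obtain ⟨d, h₁, h₂⟩ := Nat.chineseRemainder h d₁ d₂
    exact ⟨d, (hd₁.of_modEq h₁.symm).mul h (hd₂.of_modEq h₂.symm)⟩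

theorem HasMaximalOrderModDivisors.coprime {d n : ℕ} [NeZero n]
    (hd : HasMaximalOrderModDivisors d n) : d.Coprime n := by
  have hpos : 0 < orderOf (d : ZMod n) := by
    rw [hd n dvd_rfl, carmichael_eq_exponent']
    exact Nat.pos_of_ne_zero Monoid.exponent_ne_zero_of_finite
  exact (ZMod.isUnit_iff_coprime d n).1 (orderOf_pos_iff.1 hpos).isUnit

theorem stmt_13 (a : ℕ) (ha : 1 ≤ a) :
    ∃ d : ℕ, Nat.Coprime d a ∧
      ∀ f ∈ a.divisors, orderOf ((d : ZMod f)) = Monoid.exponent (ZMod f)ˣ := by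
  have : NeZero a := ⟨by omega⟩
  obtain ⟨d, hd⟩ := exists_hasMaximalOrderModDivisors (NeZero.ne a)
  refine ⟨d, hd.coprime, fun f hf ↦ ?_⟩
  rw [hd f (Nat.dvd_of_mem_divisors hf), carmichael_eq_exponent (Nat.pos_of_mem_divisors hf).ne']
end

section
/- Let p and q be distinct primes and let d ∈ ℕ be coprime to p·q. Let ξ(pq,d) denote the number of orbits of the action on ℤ/pqℤ of the subgroup of (ℤ/pqℤ)* generated by d. Then, as rational numbers, ξ(pq,d) = 1 + (p−1)/α_p(d) + (q−1)/α_q(d) + ((p−1)(q−1)/(α_p(d)·α_q(d))) · gcd(α_p(d), α_q(d)), where α_p(d) and α_q(d) are the multiplicative orders of d modulo p and modulo q respectively. -/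
/-!
Burnside's lemma for the cyclic group generated by `d`, whose order is
`L = lcm (α_p(d), α_q(d))` by the Chinese remainder theorem. Under `ℤ/pqℤ ≅ ℤ/pℤ × ℤ/qℤ`,
multiplication by `d ^ k` fixes `p` points of the first factor if `α_p(d) ∣ k` and only `0`
otherwise, and likewise for the second factor. Averaging these fixed-point counts over `k < L`
gives the formula: the term `(p - 1)(q - 1)` comes from `k = 0`, the only multiple of `L`
below `L`, and `1 / L = gcd / (α_p α_q)`.
-/

open Finset

theorem Nat.card_filter_range_dvd_of_dvd {a n : ℕ} (ha : 0 < a) (h : a ∣ n) :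
    #{k ∈ range n | a ∣ k} = n / a := by
  have hcount := count_modEq_card (b := n) ha 0
  simp only [Nat.modEq_zero_iff_dvd, Nat.zero_mod, Nat.mod_eq_zero_of_dvd h, lt_irrefl,
    if_false, add_zero, count_eq_card_filter_range] at hcount
  exact hcount

theorem sum_range_lcm_ite_dvd_mul_ite_dvd {K : Type*} [Field K] [CharZero K] (P Q : K) {a b : ℕ}
    (ha : 0 < a) (hb : 0 < b) :
    ∑ k ∈ range (a.lcm b), (if a ∣ k then P else 1) * (if b ∣ k then Q else 1)
      = a.lcm b * (1 + (P - 1) / a + (Q - 1) / b + (P - 1) * (Q - 1) / (a * b) * a.gcd b) := by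
  have hL : 0 < a.lcm b := Nat.lcm_pos ha hb
  have hterm (k : ℕ) : (if a ∣ k then P else 1) * (if b ∣ k then Q else 1)
      = 1 + (if a ∣ k then P - 1 else 0) + (if b ∣ k then Q - 1 else 0)
        + (if a.lcm b ∣ k then (P - 1) * (Q - 1) else 0) := by
    by_cases hak : a ∣ k <;> by_cases hbk : b ∣ k <;> simp [Nat.lcm_dvd_iff, hak, hbk]
    ring
  have hmultiples (c : ℕ) (hc : 0 < c) (hcL : c ∣ a.lcm b) :
      (#{k ∈ range (a.lcm b) | c ∣ k} : K) = a.lcm b / c := by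
    rw [Nat.card_filter_range_dvd_of_dvd hc hcL, Nat.cast_div hcL (Nat.cast_ne_zero.mpr hc.ne')]
  simp only [hterm, sum_add_distrib, ← sum_filter, sum_const, card_range, nsmul_eq_mul,
    hmultiples a ha (Nat.dvd_lcm_left a b), hmultiples b hb (Nat.dvd_lcm_right a b),
    hmultiples _ hL dvd_rfl]
  have hgl : (a.gcd b : K) * a.lcm b = a * b := by exact_mod_cast Nat.gcd_mul_lcm a b
  have : (a : K) ≠ 0 := Nat.cast_ne_zero.mpr ha.ne'
  have : (b : K) ≠ 0 := Nat.cast_ne_zero.mpr hb.ne'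
  have : (a.lcm b : K) ≠ 0 := Nat.cast_ne_zero.mpr hL.ne'
  field_simp
  linear_combination -(P - 1) * (Q - 1) * hgl

theorem card_mul_eq_self_of_noZeroDivisors {R : Type*} [Ring R] [NoZeroDivisors R]
    [DecidableEq R] (c : R) :
    Nat.card {x : R // c * x = x} = if c = 1 then Nat.card R else 1 := by
  split_ifs with hc
  · subst hc
    simp
  · have hfix (x : R) : c * x = x ↔ x = 0 := by
      rw [← sub_eq_zero, ← sub_one_mul, mul_eq_zero, sub_eq_zero, or_iff_right hc]
    simp [hfix]

theorem RingEquiv.card_mul_eq_self_prod {R S T : Type*} [Ring R] [Ring S] [Ring T]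
    (e : R ≃+* S × T) (c : R) :
    Nat.card {x : R // c * x = x}
      = Nat.card {s : S // (e c).1 * s = s} * Nat.card {t : T // (e c).2 * t = t} := by
  rw [← Nat.card_prod]
  refine Nat.card_congr ((e.toEquiv.subtypeEquiv fun x => ?_).trans
    (Equiv.subtypeProdEquivProd (p := fun s => (e c).1 * s = s) (q := fun t => (e c).2 * t = t)))
  rw [← e.injective.eq_iff, map_mul, Prod.ext_iff]
  rfl

theorem MulAction.card_orbitRel_quotient_zpowers_mul_orderOf {G X : Type*} [Group G]
    [MulAction G X] [Finite X] {g : G} (hg : IsOfFinOrder g) :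
    Nat.card (orbitRel.Quotient (Subgroup.zpowers g) X) * orderOf g
      = ∑ k ∈ range (orderOf g), Nat.card (fixedBy X (g ^ k)) := by
  classical
  have := Fintype.ofFinite X
  have := Fintype.ofFinite (orbitRel.Quotient (Subgroup.zpowers g) X)
  have := Fintype.ofEquiv _ (finEquivZPowers hg)
  have hcard : Fintype.card (Subgroup.zpowers g) = orderOf g := by
    rw [← Nat.card_eq_fintype_card, Nat.card_zpowers]
  calc Nat.card (orbitRel.Quotient (Subgroup.zpowers g) X) * orderOf g
      = ∑ h : Subgroup.zpowers g, Fintype.card (fixedBy X h) := by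
        rw [sum_card_fixedBy_eq_card_orbits_mul_card_group, Nat.card_eq_fintype_card, hcard]
    _ = ∑ k : Fin (orderOf g), Nat.card (fixedBy X (g ^ (k : ℕ))) := by
        refine Fintype.sum_equiv (finEquivZPowers hg).symm _ _ fun h => ?_
        rw [← Nat.card_eq_fintype_card, pow_finEquivZPowers_symm_apply]
        rfl
    _ = _ := Fin.sum_univ_eq_sum_range (fun k => Nat.card (fixedBy X (g ^ k))) _

theorem ZMod.card_natCast_mul_eq_self {p q : ℕ} [Fact p.Prime] [Fact q.Prime] (hpq : p ≠ q)
    (c : ℕ) :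
    Nat.card {x : ZMod (p * q) // (c : ZMod (p * q)) * x = x}
      = (if (c : ZMod p) = 1 then p else 1) * (if (c : ZMod q) = 1 then q else 1) := by
  have hco : p.Coprime q := (Nat.coprime_primes Fact.out Fact.out).mpr hpq
  rw [(ZMod.chineseRemainder hco).card_mul_eq_self_prod, map_natCast, Prod.fst_natCast,
    Prod.snd_natCast, card_mul_eq_self_of_noZeroDivisors, card_mul_eq_self_of_noZeroDivisors,
    Nat.card_zmod, Nat.card_zmod]

theorem ZMod.orderOf_unitOfCoprime_mul {m n d : ℕ} (hmn : m.Coprime n)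
    (hd : d.Coprime (m * n)) :
    orderOf (ZMod.unitOfCoprime d hd) = (orderOf (d : ZMod m)).lcm (orderOf (d : ZMod n)) := by
  rw [← orderOf_units, ZMod.coe_unitOfCoprime,
    ← (ZMod.chineseRemainder hmn).toMulEquiv.orderOf_eq]
  simp [Prod.orderOf]

theorem stmt_16 (p q d : ℕ) (hp : p.Prime) (hq : q.Prime) (hpq : p ≠ q)
    (hcop : Nat.Coprime d (p * q)) :
    (Nat.card (MulAction.orbitRel.Quotient
        (Subgroup.zpowers (ZMod.unitOfCoprime d hcop)) (ZMod (p * q))) : ℚ)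
      = 1 + ((p : ℚ) - 1) / (orderOf ((d : ZMod p)) : ℚ)
          + ((q : ℚ) - 1) / (orderOf ((d : ZMod q)) : ℚ)
          + (((p : ℚ) - 1) * ((q : ℚ) - 1))
              / ((orderOf ((d : ZMod p)) : ℚ) * (orderOf ((d : ZMod q)) : ℚ))
            * (Nat.gcd (orderOf ((d : ZMod p))) (orderOf ((d : ZMod q))) : ℚ) := by
  have := Fact.mk hp
  have := Fact.mk hq
  set u := ZMod.unitOfCoprime d hcop
  set a := orderOf (d : ZMod p)
  set b := orderOf (d : ZMod q)
  have hu : orderOf u = a.lcm b :=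
    ZMod.orderOf_unitOfCoprime_mul ((Nat.coprime_primes hp hq).mpr hpq) hcop
  have hfix (k : ℕ) : Nat.card (MulAction.fixedBy (ZMod (p * q)) (u ^ k))
      = (if a ∣ k then p else 1) * (if b ∣ k then q else 1) := by
    simp only [a, b, orderOf_dvd_iff_pow_eq_one, ← Nat.cast_pow,
      ← ZMod.card_natCast_mul_eq_self hpq]
    exact Nat.card_congr (Equiv.subtypeEquivRight fun x => by simp [u, Units.smul_def])
  have hL : 0 < a.lcm b := hu ▸ orderOf_pos u
  have ha : 0 < a := Nat.pos_of_ne_zero fun h => by simp [h] at hL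
  have hb : 0 < b := Nat.pos_of_ne_zero fun h => by simp [h] at hL
  have hburnside := MulAction.card_orbitRel_quotient_zpowers_mul_orderOf
    (X := ZMod (p * q)) (isOfFinOrder_of_finite u)
  simp only [hu, hfix] at hburnside
  have hburnsideQ := congrArg (Nat.cast : ℕ → ℚ) hburnside
  push_cast at hburnsideQ
  rw [sum_range_lcm_ite_dvd_mul_ite_dvd _ _ ha hb, mul_comm] at hburnsideQ
  exact mul_left_cancel₀ (by positivity) hburnsideQ
end

section
/- Let a, d, m, x ∈ ℕ with a ≥ 1, m ≥ 1, d ≥ 2, and d ∤ x. Suppose that for every k ≥ 1, d does not divide m^k·x + a·(m^{k−1} + m^{k−2} + … + m + 1). Then for every k ∈ ℕ, the k-th iterate of the generalized Collatz function satisfies C'_{a,d,m}^(k)(x) = m^k·x + a·Σ_{i=0}^{k−1} m^i; in particular the trajectory of x under C'_{a,d,m} is strictly increasing and does not loop (there are no N ∈ ℕ and k ≥ 1 with C'_{a,d,m}^(N+k)(x) = C'_{a,d,m}^(N)(x)). -/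
/-- The generalized Collatz function `C'_{a,d,m}`. -/
def genCollatz (a d m : ℕ) (x : ℕ) : ℕ := if d ∣ x then x / d else m * x + a

/-! As long as the trajectory of `x` avoids multiples of `d`, the Collatz map acts on it as the
affine map `y ↦ m y + a`, and for `m, a ≥ 1` that map is strictly increasing with `y < m y + a`,
so its orbits are strictly increasing. -/

theorem iterate_affine_apply {R : Type*} [CommSemiring R] (m a x : R) (k : ℕ) :
    (fun y => m * y + a)^[k] x = m ^ k * x + a * ∑ i ∈ Finset.range k, m ^ i := by
  induction k with
  | zero => simp
  | succ k ih =>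
    rw [Function.iterate_succ_apply', ih, geom_sum_succ]
    ring

theorem Function.iterate_apply_eq_of_eq_on_orbit {α : Type*} {f g : α → α} {x : α}
    (h : ∀ k, f (g^[k] x) = g (g^[k] x)) (k : ℕ) : f^[k] x = g^[k] x := by
  induction k with
  | zero => rfl
  | succ k ih => rw [Function.iterate_succ_apply', Function.iterate_succ_apply', ih, h]

theorem iterate_genCollatz_eq_affine {a d m x : ℕ}
    (h : ∀ k, ¬ d ∣ m ^ k * x + a * ∑ i ∈ Finset.range k, m ^ i) (k : ℕ) :
    (genCollatz a d m)^[k] x = m ^ k * x + a * ∑ i ∈ Finset.range k, m ^ i := by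
  rw [← iterate_affine_apply]
  refine Function.iterate_apply_eq_of_eq_on_orbit (fun j => ?_) k
  rw [genCollatz, if_neg (by rw [iterate_affine_apply]; exact h j)]

theorem strictMono_iterate_affine {a m : ℕ} (ha : 1 ≤ a) (hm : 1 ≤ m) (x : ℕ) :
    StrictMono fun k => (fun y => m * y + a)^[k] x := by
  have hmono : StrictMono fun y => m * y + a := fun _ _ hyz =>
    Nat.add_lt_add_right (Nat.mul_lt_mul_of_pos_left hyz hm) a
  exact hmono.strictMono_iterate_of_lt_map (by nlinarith)

theorem stmt_17_general (a d m x : ℕ) (ha : 1 ≤ a) (hm : 1 ≤ m)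
    (hx : ¬ d ∣ x)
    (hnd : ∀ k : ℕ, 1 ≤ k → ¬ d ∣ (m ^ k * x + a * ∑ i ∈ Finset.range k, m ^ i)) :
    (∀ k : ℕ, (genCollatz a d m)^[k] x = m ^ k * x + a * ∑ i ∈ Finset.range k, m ^ i) ∧
    StrictMono (fun k : ℕ => (genCollatz a d m)^[k] x) ∧
    ¬ ∃ (N k : ℕ), 1 ≤ k ∧ (genCollatz a d m)^[N + k] x = (genCollatz a d m)^[N] x := by
  have hndiv : ∀ k, ¬ d ∣ m ^ k * x + a * ∑ i ∈ Finset.range k, m ^ i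
    | 0 => by simpa using hx
    | k + 1 => hnd (k + 1) k.succ_pos
  have hform := iterate_genCollatz_eq_affine hndiv
  have hstrict : StrictMono fun k => (genCollatz a d m)^[k] x := by
    simpa only [hform, ← iterate_affine_apply] using strictMono_iterate_affine ha hm x
  refine ⟨hform, hstrict, ?_⟩
  rintro ⟨N, k, hk, hloop⟩
  exact (hstrict (Nat.lt_add_of_pos_right hk)).ne' hloop

theorem stmt_17 (a d m x : ℕ) (ha : 1 ≤ a) (hm : 1 ≤ m) (hd : 2 ≤ d)
    (hx : ¬ d ∣ x)
    (hnd : ∀ k : ℕ, 1 ≤ k → ¬ d ∣ (m ^ k * x + a * ∑ i ∈ Finset.range k, m ^ i)) :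
    (∀ k : ℕ, (genCollatz a d m)^[k] x = m ^ k * x + a * ∑ i ∈ Finset.range k, m ^ i) ∧
    StrictMono (fun k : ℕ => (genCollatz a d m)^[k] x) ∧
    ¬ ∃ (N k : ℕ), 1 ≤ k ∧ (genCollatz a d m)^[N + k] x = (genCollatz a d m)^[N] x :=
  stmt_17_general a d m x ha hm hx hnd
end
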